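/- arXiv:1606.01378 — 2 statements merged into one kernel-verified Lean document; each statement's English description precedes it below -/
import Mathlib

section
/- Let T>0 and α ∈ (0,1). Suppose v : [0,T] → ℝ is absolutely continuous with v(0) = 0 and v̇ ∈ L¹([0,T]), and let φ ∈ C¹([0,T]). Then for almost every t ∈ (0,T): (g_α*(φ·v̇))(t) = φ(t)·(g_α*v̇)(t) + ∫₀ᵗ v(σ)·[ ((1−α)/Γ(α))·(t−σ)^{α−2}·(φ(t)−φ(σ)) − g_α(t−σ)·φ̇(σ) ] dσ, where the integrand is ∂_σ( g_α(t−σ)·(φ(t)−φ(σ)) ). -/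
open MeasureTheory Set

/-- The standard kernel `g_γ(t) = t^{γ-1}/Γ(γ)`. -/
noncomputable def gker (γ t : ℝ) : ℝ := t ^ (γ - 1) / Real.Gamma γ

/-!
Fix `t` at which `s ↦ g_α(t - s) v'(s)` is integrable on `(0, t)`; this holds for a.e. `t`
because the convolution of two `L¹` functions exists almost everywhere. The function
`G(σ) = g_α(t - σ) (φ t - φ σ)` is `O((t - σ)^α)`, so it extends continuously by `0` at
`σ = t`, and its derivative `K` is `O((t - σ)^(α-1))`, hence integrable; thus
`∫_s^t K = -G(s)`. Writing `v(σ) = ∫_0^σ v'` and exchanging the order of integration gives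
`∫_0^t v K = -∫_0^t v'(s) G(s) ds`, which rearranges to the identity.
-/

open Filter Topology

theorem hasDerivAt_gker_sub (γ : ℝ) {t σ : ℝ} (hσ : σ < t) :
    HasDerivAt (fun x => gker γ (t - x)) ((1 - γ) / Real.Gamma γ * (t - σ) ^ (γ - 2)) σ := by
  have h := (((hasDerivAt_id' σ).const_sub t).rpow_const (p := γ - 1)
    (Or.inl (sub_ne_zero.mpr hσ.ne'))).div_const (Real.Gamma γ)
  rw [show γ - 1 - 1 = γ - 2 by ring] at h
  exact h.congr_deriv (by ring)

theorem intervalIntegrable_gker {γ : ℝ} (hγ : 0 < γ) (a b : ℝ) :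
    IntervalIntegrable (gker γ) volume a b :=
  (intervalIntegral.intervalIntegrable_rpow' (by linarith)).div_const _

theorem abs_sub_le_mul_of_abs_deriv_le {φ φ' : ℝ → ℝ} {a b C : ℝ}
    (hφ : ∀ x ∈ Icc a b, HasDerivAt φ (φ' x) x) (hC : ∀ x ∈ Icc a b, |φ' x| ≤ C)
    {σ : ℝ} (hσ : σ ∈ Icc a b) : |φ b - φ σ| ≤ C * (b - σ) := by
  have h := (convex_Icc a b).norm_image_sub_le_of_norm_hasDerivWithin_le
    (fun x hx => (hφ x hx).hasDerivWithinAt) hC hσ (right_mem_Icc.mpr (hσ.1.trans hσ.2))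
  rwa [Real.norm_eq_abs, Real.norm_eq_abs, abs_of_nonneg (sub_nonneg.mpr hσ.2)] at h

theorem integral_primitive_mul_eq_integral_mul_integral {f k : ℝ → ℝ} {a b : ℝ}
    (hab : a ≤ b) (hf : IntervalIntegrable f volume a b) (hk : IntervalIntegrable k volume a b) :
    ∫ σ in a..b, (∫ s in a..σ, f s) * k σ = ∫ s in a..b, f s * ∫ σ in s..b, k σ := by
  rw [intervalIntegrable_iff_integrableOn_Ioc_of_le hab] at hf hk
  set F : ℝ × ℝ → ℝ := {p | p.2 ≤ p.1}.indicator fun p => k p.1 * f p.2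
  have hF : Integrable F ((volume.restrict (Ioc a b)).prod (volume.restrict (Ioc a b))) :=
    (hk.mul_prod hf).indicator (measurableSet_le measurable_snd measurable_fst)
  have hσ : ∀ σ ∈ Ioc a b, ∫ s in Ioc a b, F (σ, s) = (∫ s in a..σ, f s) * k σ := by
    intro σ hσ
    have : (fun s => F (σ, s)) = (Iic σ).indicator fun s => f s * k σ := by
      ext s; by_cases h : s ≤ σ <;> simp [F, h, mul_comm]
    rw [this, integral_indicator measurableSet_Iic, Measure.restrict_restrict measurableSet_Iic,
      Iic_inter_Ioc_of_le hσ.2, intervalIntegral.integral_of_le hσ.1.le, integral_mul_const]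
  have hs : ∀ s ∈ Ioc a b, ∫ σ in Ioc a b, F (σ, s) = f s * ∫ σ in s..b, k σ := by
    intro s hs
    have : (fun σ => F (σ, s)) = (Ici s).indicator fun σ => f s * k σ := by
      ext σ; by_cases h : s ≤ σ <;> simp [F, h, mul_comm]
    have hIcc : Ici s ∩ Ioc a b = Icc s b :=
      Set.ext fun σ => ⟨fun h => ⟨h.1, h.2.2⟩, fun h => ⟨h.1, hs.1.trans_le h.1, h.2⟩⟩
    rw [this, integral_indicator measurableSet_Ici, Measure.restrict_restrict measurableSet_Ici,
      hIcc, integral_Icc_eq_integral_Ioc,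
      ← intervalIntegral.integral_of_le hs.2, intervalIntegral.integral_const_mul]
  rw [intervalIntegral.integral_of_le hab, intervalIntegral.integral_of_le hab,
    ← setIntegral_congr_fun measurableSet_Ioc hσ, ← setIntegral_congr_fun measurableSet_Ioc hs]
  exact integral_integral_swap hF

noncomputable def gkerIncrement (α : ℝ) (φ : ℝ → ℝ) (t σ : ℝ) : ℝ :=
  gker α (t - σ) * (φ t - φ σ)

noncomputable def gkerIncrementDeriv (α : ℝ) (φ φ' : ℝ → ℝ) (t σ : ℝ) : ℝ :=
  (1 - α) / Real.Gamma α * (t - σ) ^ (α - 2) * (φ t - φ σ) - gker α (t - σ) * φ' σ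

section gkerIncrement

variable {α C t : ℝ} {φ φ' : ℝ → ℝ}

theorem hasDerivAt_gkerIncrement {σ : ℝ} (hσ : σ < t) (hφ : HasDerivAt φ (φ' σ) σ) :
    HasDerivAt (gkerIncrement α φ t) (gkerIncrementDeriv α φ φ' t σ) σ :=
  ((hasDerivAt_gker_sub α hσ).mul (hφ.const_sub (φ t))).congr_deriv
    (by unfold gkerIncrementDeriv; ring)

theorem abs_gkerIncrement_le (hα : 0 < α) {σ : ℝ} (hσ : σ ≤ t)
    (hφ : |φ t - φ σ| ≤ C * (t - σ)) :
    |gkerIncrement α φ t σ| ≤ C / Real.Gamma α * (t - σ) ^ α := by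
  rcases hσ.lt_or_eq with hlt | rfl
  · have hpos : 0 < t - σ := sub_pos.mpr hlt
    calc |gkerIncrement α φ t σ| = (t - σ) ^ (α - 1) / Real.Gamma α * |φ t - φ σ| := by
          rw [gkerIncrement, gker, abs_mul, abs_of_nonneg (by positivity)]
      _ ≤ (t - σ) ^ (α - 1) / Real.Gamma α * (C * (t - σ)) := by gcongr
      _ = C / Real.Gamma α * ((t - σ) ^ (α - 1) * (t - σ)) := by ring
      _ = C / Real.Gamma α * (t - σ) ^ α := by
          rw [← Real.rpow_add_one hpos.ne', sub_add_cancel]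
  · simp [gkerIncrement, Real.zero_rpow hα.ne']

theorem abs_gkerIncrementDeriv_le (hα : α ∈ Ioo 0 1) {σ : ℝ} (hσ : σ < t)
    (hφ : |φ t - φ σ| ≤ C * (t - σ)) (hφ' : |φ' σ| ≤ C) :
    |gkerIncrementDeriv α φ φ' t σ| ≤ (2 - α) * C * gker α (t - σ) := by
  have hpos : 0 < t - σ := sub_pos.mpr hσ
  have hΓ := Real.Gamma_pos_of_pos hα.1
  have hα1 : 0 ≤ 1 - α := sub_nonneg.mpr hα.2.le
  have hpow : (t - σ) ^ (α - 2) * (t - σ) = (t - σ) ^ (α - 1) := by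
    rw [← Real.rpow_add_one hpos.ne']; ring_nf
  unfold gkerIncrementDeriv gker
  calc _ ≤ |(1 - α) / Real.Gamma α * (t - σ) ^ (α - 2) * (φ t - φ σ)|
          + |(t - σ) ^ (α - 1) / Real.Gamma α * φ' σ| := abs_sub _ _
    _ = (1 - α) / Real.Gamma α * (t - σ) ^ (α - 2) * |φ t - φ σ|
          + (t - σ) ^ (α - 1) / Real.Gamma α * |φ' σ| := by
        have h1 : 0 ≤ (1 - α) / Real.Gamma α * (t - σ) ^ (α - 2) := by positivity
        have h2 : 0 ≤ (t - σ) ^ (α - 1) / Real.Gamma α := by positivity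
        rw [abs_mul, abs_mul (_ / _) (φ' σ), abs_of_nonneg h1, abs_of_nonneg h2]
    _ ≤ (1 - α) / Real.Gamma α * (t - σ) ^ (α - 2) * (C * (t - σ))
          + (t - σ) ^ (α - 1) / Real.Gamma α * C := by gcongr
    _ = (2 - α) * C * ((t - σ) ^ (α - 1) / Real.Gamma α) := by rw [← hpow]; ring

theorem continuousOn_gkerIncrement (hα : 0 < α) (hφ : ∀ x ∈ Icc 0 t, HasDerivAt φ (φ' x) x)
    (hC : ∀ x ∈ Icc 0 t, |φ' x| ≤ C) : ContinuousOn (gkerIncrement α φ t) (Icc 0 t) := by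
  intro x hx
  rcases hx.2.lt_or_eq with hlt | hxt
  · exact (hasDerivAt_gkerIncrement hlt (hφ x hx)).continuousAt.continuousWithinAt
  subst x
  have hbound : Tendsto (fun u => C / Real.Gamma α * (t - u) ^ α) (𝓝 t) (𝓝 0) := by
    have h : Continuous fun u : ℝ => C / Real.Gamma α * (t - u) ^ α :=
      continuous_const.mul ((continuous_const.sub continuous_id).rpow_const
        fun _ => Or.inr hα.le)
    simpa [Real.zero_rpow hα.ne'] using h.tendsto t
  have ht0 : gkerIncrement α φ t t = 0 := by simp [gkerIncrement]
  rw [ContinuousWithinAt, ht0]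
  refine squeeze_zero_norm' ?_ (hbound.mono_left nhdsWithin_le_nhds)
  filter_upwards [self_mem_nhdsWithin] with u hu
  exact abs_gkerIncrement_le hα hu.2 (abs_sub_le_mul_of_abs_deriv_le hφ hC hu)

theorem intervalIntegrable_gkerIncrementDeriv (hα : α ∈ Ioo 0 1)
    (hφ : ∀ x ∈ Icc 0 t, HasDerivAt φ (φ' x) x) (hφ' : ContinuousOn φ' (Icc 0 t))
    (hC : ∀ x ∈ Icc 0 t, |φ' x| ≤ C) (ht : 0 ≤ t) :
    IntervalIntegrable (gkerIncrementDeriv α φ φ' t) volume 0 t := by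
  have hg : IntervalIntegrable (fun σ => (2 - α) * C * gker α (t - σ)) volume 0 t := by
    simpa using ((intervalIntegrable_gker hα.1 t 0).comp_sub_left t).const_mul ((2 - α) * C)
  have hcont : ContinuousOn (gkerIncrementDeriv α φ φ' t) (Ioo 0 t) := by
    have hφc : ContinuousOn φ (Ioo 0 t) := fun x hx =>
      (hφ x (Ioo_subset_Icc_self hx)).continuousAt.continuousWithinAt
    have hpow : ∀ p : ℝ, ContinuousOn (fun σ : ℝ => (t - σ) ^ p) (Ioo 0 t) := fun p =>
      (continuousOn_const.sub continuousOn_id).rpow_const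
        fun σ hσ => Or.inl (sub_ne_zero.mpr hσ.2.ne')
    exact ((continuousOn_const.mul (hpow _)).mul (continuousOn_const.sub hφc)).sub
      (((hpow _).div_const _).mul (hφ'.mono Ioo_subset_Icc_self))
  rw [intervalIntegrable_iff_integrableOn_Ioc_of_le ht, integrableOn_Ioc_iff_integrableOn_Ioo]
  refine Integrable.mono' (((intervalIntegrable_iff_integrableOn_Ioo_of_le ht).mp hg))
    (hcont.aestronglyMeasurable measurableSet_Ioo) ?_
  filter_upwards [ae_restrict_mem measurableSet_Ioo] with σ hσ
  exact abs_gkerIncrementDeriv_le hα hσ.2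
    (abs_sub_le_mul_of_abs_deriv_le hφ hC (Ioo_subset_Icc_self hσ))
    (hC σ (Ioo_subset_Icc_self hσ))

theorem integral_gkerIncrementDeriv (hα : α ∈ Ioo 0 1)
    (hφ : ∀ x ∈ Icc 0 t, HasDerivAt φ (φ' x) x) (hφ' : ContinuousOn φ' (Icc 0 t))
    (hC : ∀ x ∈ Icc 0 t, |φ' x| ≤ C) {s : ℝ} (hs : s ∈ Icc 0 t) :
    ∫ σ in s..t, gkerIncrementDeriv α φ φ' t σ = -gkerIncrement α φ t s := by
  have hsub : Icc s t ⊆ Icc 0 t := Icc_subset_Icc_left hs.1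
  rw [intervalIntegral.integral_eq_sub_of_hasDerivAt_of_le hs.2
    ((continuousOn_gkerIncrement hα.1 hφ hC).mono hsub)
    (fun x hx => hasDerivAt_gkerIncrement hx.2 (hφ x (hsub (Ioo_subset_Icc_self hx))))
    ((intervalIntegrable_gkerIncrementDeriv hα hφ hφ' hC (hs.1.trans hs.2)).mono_set
      (by rwa [uIcc_of_le hs.2, uIcc_of_le (hs.1.trans hs.2)]))]
  simp [gkerIncrement]

end gkerIncrement

theorem ae_intervalIntegrable_comp_sub_mul {k f : ℝ → ℝ} {T : ℝ}
    (hk : IntegrableOn k (Ioo 0 T)) (hf : IntegrableOn f (Ioo 0 T)) :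
    ∀ᵐ t ∂(volume.restrict (Ioo 0 T)),
      IntervalIntegrable (fun s => k (t - s) * f s) volume 0 t := by
  have hconv := (hf.integrable_indicator measurableSet_Ioo).ae_convolution_exists
    (L := ContinuousLinearMap.mul ℝ ℝ) (hk.integrable_indicator measurableSet_Ioo)
  filter_upwards [ae_restrict_of_ae hconv, ae_restrict_mem measurableSet_Ioo] with t ht htT
  rw [intervalIntegrable_iff_integrableOn_Ioo_of_le htT.1.le]
  refine (ht.integrableOn (s := Ioo 0 t)).congr_fun (fun s hs => ?_) measurableSet_Ioo
  have hs₁ : s ∈ Ioo 0 T := ⟨hs.1, hs.2.trans htT.2⟩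
  have hs₂ : t - s ∈ Ioo 0 T := ⟨sub_pos.mpr hs.2, by linarith [hs.1, htT.2]⟩
  simp [indicator_of_mem hs₁, indicator_of_mem hs₂, mul_comm]

theorem integral_gker_mul_mul_eq {α t : ℝ} (hα : α ∈ Ioo 0 1) (ht : 0 ≤ t)
    {v v' φ φ' : ℝ → ℝ}
    (hv' : IntervalIntegrable v' volume 0 t) (hv : ∀ σ ∈ Icc 0 t, v σ = ∫ s in 0..σ, v' s)
    (hφ : ∀ x ∈ Icc 0 t, HasDerivAt φ (φ' x) x) (hφ' : ContinuousOn φ' (Icc 0 t))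
    (hgv' : IntervalIntegrable (fun s => gker α (t - s) * v' s) volume 0 t) :
    ∫ s in 0..t, gker α (t - s) * (φ s * v' s)
      = φ t * (∫ s in 0..t, gker α (t - s) * v' s)
        + ∫ σ in 0..t, v σ * gkerIncrementDeriv α φ φ' t σ := by
  obtain ⟨C, hC⟩ := isCompact_Icc.exists_bound_of_continuousOn hφ'
  have hφc : ContinuousOn φ (uIcc 0 t) := by
    rw [uIcc_of_le ht]
    exact fun x hx => (hφ x hx).continuousAt.continuousWithinAt
  have hgφv' : IntervalIntegrable (fun s => gker α (t - s) * (φ s * v' s)) volume 0 t :=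
    (hgv'.continuousOn_mul hφc).congr fun s _ => by ring
  have hswap : ∫ σ in 0..t, v σ * gkerIncrementDeriv α φ φ' t σ
      = ∫ s in 0..t, v' s * -gkerIncrement α φ t s := by
    calc _ = ∫ σ in 0..t, (∫ s in 0..σ, v' s) * gkerIncrementDeriv α φ φ' t σ :=
          intervalIntegral.integral_congr fun σ hσ => by
            rw [uIcc_of_le ht] at hσ; simp only [hv σ hσ]
      _ = ∫ s in 0..t, v' s * ∫ σ in s..t, gkerIncrementDeriv α φ φ' t σ :=
          integral_primitive_mul_eq_integral_mul_integral ht hv'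
            (intervalIntegrable_gkerIncrementDeriv hα hφ hφ' hC ht)
      _ = ∫ s in 0..t, v' s * -gkerIncrement α φ t s :=
          intervalIntegral.integral_congr fun s hs => by
            rw [uIcc_of_le ht] at hs; simp only [integral_gkerIncrementDeriv hα hφ hφ' hC hs]
  have hsplit : ∫ s in 0..t, v' s * -gkerIncrement α φ t s
      = (∫ s in 0..t, gker α (t - s) * (φ s * v' s))
        - φ t * ∫ s in 0..t, gker α (t - s) * v' s := by
    calc _ = ∫ s in 0..t, gker α (t - s) * (φ s * v' s) - φ t * (gker α (t - s) * v' s) :=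
          intervalIntegral.integral_congr fun s _ => by simp only [gkerIncrement]; ring
      _ = _ := by
          rw [intervalIntegral.integral_sub hgφv' (hgv'.const_mul (φ t)),
            intervalIntegral.integral_const_mul]
  rw [hswap, hsplit, add_sub_cancel]

theorem statement3_general
    (T : ℝ) (α : ℝ) (hα : α ∈ Ioo (0 : ℝ) 1)
    (v v' : ℝ → ℝ)
    (hv'int : IntegrableOn v' (Icc 0 T))
    (hvac : ∀ t ∈ Icc (0 : ℝ) T, v t = ∫ s in (0 : ℝ)..t, v' s)
    (φ φ' : ℝ → ℝ)
    (hφ : ∀ t ∈ Icc (0 : ℝ) T, HasDerivAt φ (φ' t) t)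
    (hφ' : ContinuousOn φ' (Icc 0 T)) :
    ∀ᵐ t ∂(volume.restrict (Ioo 0 T)),
      (∫ s in (0 : ℝ)..t, gker α (t - s) * (φ s * v' s))
        = φ t * (∫ s in (0 : ℝ)..t, gker α (t - s) * v' s)
          + ∫ σ in (0 : ℝ)..t,
              v σ * (((1 - α) / Real.Gamma α) * (t - σ) ^ (α - 2) * (φ t - φ σ)
                      - gker α (t - σ) * φ' σ) := by
  have hgker : IntegrableOn (gker α) (Ioo 0 T) :=
    (intervalIntegrable_gker hα.1 0 T).1.mono_set Ioo_subset_Ioc_self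
  filter_upwards [ae_intervalIntegrable_comp_sub_mul hgker
    (hv'int.mono_set Ioo_subset_Icc_self), ae_restrict_mem measurableSet_Ioo] with t hgv' ht
  have hsub : Icc 0 t ⊆ Icc 0 T := Icc_subset_Icc_right ht.2.le
  exact integral_gker_mul_mul_eq hα ht.1.le
    ((intervalIntegrable_iff_integrableOn_Icc_of_le ht.1.le).mpr (hv'int.mono_set hsub))
    (fun σ hσ => hvac σ (hsub hσ)) (fun x hx => hφ x (hsub hx)) (hφ'.mono hsub) hgv'

/-- Let `T > 0`, `α ∈ (0,1)`, let `v : [0,T] → ℝ` be absolutely continuous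
with `v(0) = 0` and `v' ∈ L¹([0,T])`, and let `φ ∈ C¹([0,T])`. Then for a.e. `t ∈ (0,T)`:
`(g_α*(φ v'))(t) = φ(t)(g_α*v')(t)
  + ∫₀ᵗ v(σ)[((1-α)/Γ(α))(t-σ)^{α-2}(φ(t)-φ(σ)) - g_α(t-σ) φ'(σ)] dσ`. -/
theorem statement3
    (T : ℝ) (hT : 0 < T) (α : ℝ) (hα : α ∈ Ioo (0 : ℝ) 1)
    (v v' : ℝ → ℝ)
    (hv'int : IntegrableOn v' (Icc 0 T))
    (hv0 : v 0 = 0)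
    (hvac : ∀ t ∈ Icc (0 : ℝ) T, v t = ∫ s in (0 : ℝ)..t, v' s)
    (φ φ' : ℝ → ℝ)
    (hφ : ∀ t ∈ Icc (0 : ℝ) T, HasDerivAt φ (φ' t) t)
    (hφ' : ContinuousOn φ' (Icc 0 T)) :
    ∀ᵐ t ∂(volume.restrict (Ioo 0 T)),
      (∫ s in (0 : ℝ)..t, gker α (t - s) * (φ s * v' s))
        = φ t * (∫ s in (0 : ℝ)..t, gker α (t - s) * v' s)
          + ∫ σ in (0 : ℝ)..t,
              v σ * (((1 - α) / Real.Gamma α) * (t - σ) ^ (α - 2) * (φ t - φ σ)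
                      - gker α (t - σ) * φ' σ) :=
  statement3_general T α hα v v' hv'int hvac φ φ' hφ hφ'
end

section
/- Let (X,μ) be a measure space, (U_σ)_{σ∈(0,1]} a family of measurable subsets of X with U_{σ'} ⊆ U_σ whenever σ' ≤ σ, and assume μ(U₁) ≤ 1. Let κ > 1, 0 < p₀ < κ, C ≥ 1 and γ > 0. Suppose f is a measurable function on U₁ such that ‖f‖_{L^{βκ}(U_{σ'})} ≤ ( C/(σ−σ')^{γ} )^{1/β}·‖f‖_{L^{β}(U_σ)} for all 0 < σ' < σ ≤ 1 and all β with 0 < β ≤ p₀/κ < 1. Then there exist constants M = M(C,γ,κ) and γ₀ = γ₀(γ,κ) such that for all δ ∈ (0,1) and all p ∈ (0, p₀/κ]: ‖f‖_{L^{p₀}(U_δ)} ≤ ( M/(1−δ)^{γ₀} )^{1/p − 1/p₀}·‖f‖_{L^{p}(U₁)}. -/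
open MeasureTheory Set ENNReal

/-- The (quasi-)norm `‖f‖_{L^β(U)} = (∫_U |f|^β dμ)^{1/β}`, valued in `ℝ≥0∞`,
for any exponent `β > 0`. -/
noncomputable def plnorm {X : Type*} [MeasurableSpace X] (μ : Measure X) (U : Set X)
    (f : X → ℝ) (β : ℝ) : ℝ≥0∞ :=
  (∫⁻ x in U, ENNReal.ofReal |f x| ^ β ∂μ) ^ (1 / β)

/-!
Start from `q = p₀ / κⁿ ∈ [p / κ, p]`, where Hölder on `U 1` (of measure at most `1`) gives
`‖f‖_{L^q} ≤ ‖f‖_{L^p}`, and apply the reverse Hölder hypothesis along the exponents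
`q, qκ, …, qκⁿ = p₀` and the radii `σ_k = δ + (1 - δ) / 2^k`. The `k`-th step costs
`(C / (1 - δ)^γ · 2^{γ(k+1)})^{κ^{-k} / q}`; since `∑ κ^{-k}` and `∑ (k + 1) κ^{-k}` converge, the
product of all costs is `Z^{1/q}` with `Z = (C / (1 - δ)^γ)^r 2^{γ r²}`, `r = κ / (κ - 1)`.
Finally `pκ ≤ p₀` gives `1 / q ≤ κ / p ≤ κ r (1 / p - 1 / p₀)`.
-/

open Finset in
theorem le_prod_range_mul_of_forall_succ_le_mul {M : Type*} [CommMonoid M] [Preorder M]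
    [MulLeftMono M] {a c : ℕ → M} {n : ℕ} (h : ∀ k < n, a (k + 1) ≤ c k * a k) :
    a n ≤ (∏ k ∈ range n, c k) * a 0 := by
  induction n with
  | zero => simp
  | succ n ih =>
    calc a (n + 1) ≤ c n * a n := h n n.lt_succ_self
      _ ≤ c n * ((∏ k ∈ range n, c k) * a 0) :=
        mul_le_mul_right (ih fun k hk => h k (hk.trans n.lt_succ_self)) _
      _ = (∏ k ∈ range (n + 1), c k) * a 0 := by rw [prod_range_succ, mul_comm _ (c n), mul_assoc]

section plnorm

variable {X : Type*} [MeasurableSpace X] (μ : Measure X)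

theorem plnorm_eq_eLpNorm (V : Set X) (f : X → ℝ) {β : ℝ} (hβ : 0 < β) :
    plnorm μ V f β = eLpNorm f (ENNReal.ofReal β) (μ.restrict V) := by
  rw [eLpNorm_eq_lintegral_rpow_enorm_toReal (by simp [hβ]) (by simp),
    ENNReal.toReal_ofReal hβ.le, plnorm]
  simp_rw [Real.enorm_eq_ofReal_abs]

theorem plnorm_mono_set {V W : Set X} (hVW : V ⊆ W) (f : X → ℝ) {β : ℝ} (hβ : 0 ≤ β) :
    plnorm μ V f β ≤ plnorm μ W f β :=
  ENNReal.rpow_le_rpow (lintegral_mono_set hVW) (one_div_nonneg.2 hβ)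

theorem plnorm_mono_exponent {V : Set X} (hμ : μ V ≤ 1) {f : X → ℝ}
    (hf : AEStronglyMeasurable f (μ.restrict V)) {a b : ℝ} (ha : 0 < a) (hab : a ≤ b) :
    plnorm μ V f a ≤ plnorm μ V f b := by
  have hb : 0 < b := ha.trans_le hab
  rw [plnorm_eq_eLpNorm μ V f ha, plnorm_eq_eLpNorm μ V f hb]
  refine (eLpNorm_le_eLpNorm_mul_rpow_measure_univ (ENNReal.ofReal_le_ofReal hab) hf).trans ?_
  rw [Measure.restrict_apply_univ, ENNReal.toReal_ofReal ha.le, ENNReal.toReal_ofReal hb.le]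
  refine mul_le_of_le_one_right' (ENNReal.rpow_le_one hμ ?_)
  exact sub_nonneg.2 (one_div_le_one_div_of_le ha hab)

end plnorm

open Finset in
theorem sum_range_succ_mul_pow_le {x : ℝ} (hx0 : 0 ≤ x) (hx1 : x < 1) (n : ℕ) :
    ∑ k ∈ range n, ((k : ℝ) + 1) * x ^ k ≤ (1 - x)⁻¹ ^ 2 := by
  have h := hasSum_choose_mul_geometric_of_norm_lt_one 1
    (by rwa [Real.norm_eq_abs, abs_of_nonneg hx0] : ‖x‖ < 1)
  simp only [Nat.choose_one_right, Nat.cast_add, Nat.cast_one, one_div, ← inv_pow] at h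
  exact sum_le_hasSum _ (fun k _ => by positivity) h

open Finset in
theorem prod_mul_pow_rpow_le {A b x q : ℝ} (hA : 1 ≤ A) (hb : 1 ≤ b) (hx0 : 0 ≤ x)
    (hx1 : x < 1) (hq : 0 < q) (n : ℕ) :
    ∏ k ∈ range n, (A * b ^ (k + 1)) ^ (x ^ k / q)
      ≤ (A ^ (1 - x)⁻¹ * b ^ ((1 - x)⁻¹ ^ 2)) ^ (1 / q) := by
  have hA0 : 0 < A := one_pos.trans_le hA
  have hb0 : 0 < b := one_pos.trans_le hb
  have hgeom : ∑ k ∈ range n, x ^ k ≤ (1 - x)⁻¹ := by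
    simpa [← range_eq_Ico, div_eq_mul_inv] using
      geom_sum_Ico_le_of_lt_one (m := 0) (n := n) hx0 hx1
  calc ∏ k ∈ range n, (A * b ^ (k + 1)) ^ (x ^ k / q)
      = A ^ (∑ k ∈ range n, x ^ k / q) * b ^ (∑ k ∈ range n, ((k : ℝ) + 1) * x ^ k / q) := by
        rw [Real.rpow_sum_of_pos hA0, Real.rpow_sum_of_pos hb0, ← prod_mul_distrib]
        refine prod_congr rfl fun k _ => ?_
        rw [Real.mul_rpow hA0.le (by positivity), ← Real.rpow_natCast b (k + 1),
          ← Real.rpow_mul hb0.le]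
        push_cast
        ring_nf
    _ ≤ A ^ ((1 - x)⁻¹ / q) * b ^ ((1 - x)⁻¹ ^ 2 / q) := by
        rw [← sum_div, ← sum_div]
        gcongr
        exact sum_range_succ_mul_pow_le hx0 hx1 n
    _ = (A ^ (1 - x)⁻¹ * b ^ ((1 - x)⁻¹ ^ 2)) ^ (1 / q) := by
        rw [Real.mul_rpow (by positivity) (by positivity), ← Real.rpow_mul hA0.le,
          ← Real.rpow_mul hb0.le, mul_one_div, mul_one_div]

open Finset in
theorem plnorm_iterate_le {X : Type*} [MeasurableSpace X] (μ : Measure X) {U : ℝ → Set X}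
    {f : X → ℝ} {κ B C γ : ℝ}
    (hiter : ∀ σ' σ β : ℝ, 0 < σ' → σ' < σ → σ ≤ 1 → 0 < β → β ≤ B →
      plnorm μ (U σ') f (β * κ) ≤ ENNReal.ofReal (C / (σ - σ') ^ γ) ^ (1 / β) * plnorm μ (U σ) f β)
    {ρ : ℕ → ℝ} (hρpos : ∀ k, 0 < ρ k) (hρ : StrictAnti ρ) (hρ0 : ρ 0 ≤ 1)
    {q : ℝ} (hq : 0 < q) (hκ : 0 < κ) {n : ℕ} (hqB : ∀ k < n, q * κ ^ k ≤ B) :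
    plnorm μ (U (ρ n)) f (q * κ ^ n) ≤
      (∏ k ∈ range n, ENNReal.ofReal (C / (ρ k - ρ (k + 1)) ^ γ) ^ (1 / (q * κ ^ k)))
        * plnorm μ (U (ρ 0)) f q := by
  have h := le_prod_range_mul_of_forall_succ_le_mul
    (a := fun k => plnorm μ (U (ρ k)) f (q * κ ^ k)) (n := n) fun k hk => by
      simpa only [pow_succ, ← mul_assoc] using
        hiter (ρ (k + 1)) (ρ k) (q * κ ^ k) (hρpos _) (hρ k.lt_succ_self)
          ((hρ.antitone k.zero_le).trans hρ0) (by positivity) (hqB k hk)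
  simpa only [pow_zero, mul_one] using h

theorem exists_mul_pow_eq_of_mul_le {κ p p₀ : ℝ} (hκ : 1 < κ) (hp : 0 < p) (hpp₀ : p * κ ≤ p₀) :
    ∃ (n : ℕ) (q : ℝ), 0 < q ∧ q * κ ^ n = p₀ ∧ (∀ k < n, q * κ ^ k ≤ p₀ / κ) ∧
      q ≤ p ∧ p ≤ κ * q := by
  have hκ0 : 0 < κ := one_pos.trans hκ
  have hp₀ : p ≤ p₀ := le_trans (le_mul_of_one_le_right hp.le hκ.le) hpp₀
  have hp₀0 : 0 < p₀ := hp.trans_le hp₀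
  obtain ⟨m, hm, hm'⟩ := exists_nat_pow_near ((one_le_div hp).2 hp₀) hκ
  rw [le_div_iff₀ hp, mul_comm] at hm
  rw [div_lt_iff₀ hp, mul_comm] at hm'
  have hq : p₀ / κ ^ (m + 1) * κ ^ m = p₀ / κ := by
    field_simp
    ring
  refine ⟨m + 1, p₀ / κ ^ (m + 1), by positivity, div_mul_cancel₀ _ (by positivity),
    fun k hk => ?_, ?_, ?_⟩
  · calc p₀ / κ ^ (m + 1) * κ ^ k ≤ p₀ / κ ^ (m + 1) * κ ^ m := by
          gcongr
          exacts [hκ.le, Nat.lt_succ_iff.1 hk]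
      _ = p₀ / κ := hq
  · rw [div_le_iff₀ (by positivity)]
    exact hm'.le
  · rw [mul_div, le_div_iff₀ (by positivity), pow_succ]
    nlinarith

theorem one_div_le_mul_sub {κ p p₀ q : ℝ} (hκ : 1 < κ) (hp : 0 < p) (hpp₀ : p * κ ≤ p₀)
    (hpq : p ≤ κ * q) :
    1 / q ≤ κ * (1 - κ⁻¹)⁻¹ * (1 / p - 1 / p₀) := by
  have hκ0 : 0 < κ := one_pos.trans hκ
  have hq : 0 < q := pos_of_mul_pos_right (hp.trans_le hpq) hκ0.le
  calc 1 / q ≤ κ / p := by rw [div_le_div_iff₀ hq hp]; linarith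
    _ = κ * (1 - κ⁻¹)⁻¹ * (1 / p - 1 / (p * κ)) := by
        have : κ - 1 ≠ 0 := by linarith
        field_simp
    _ ≤ κ * (1 - κ⁻¹)⁻¹ * (1 / p - 1 / p₀) := by
        have : 0 < 1 - κ⁻¹ := sub_pos.2 (inv_lt_one_of_one_lt₀ hκ)
        gcongr

theorem one_le_div_rpow {C t γ : ℝ} (hC : 1 ≤ C) (ht0 : 0 < t) (ht1 : t ≤ 1) (hγ : 0 ≤ γ) :
    1 ≤ C / t ^ γ := by
  rw [one_le_div (by positivity)]
  exact (Real.rpow_le_one ht0.le ht1 hγ).trans hC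

theorem div_rpow_rpow_mul_rpow {C t B : ℝ} (hC : 0 ≤ C) (ht : 0 ≤ t) (hB : 0 ≤ B) (γ r s : ℝ) :
    ((C / t ^ γ) ^ r * B) ^ s = (C ^ r * B) ^ s / t ^ (γ * r * s) := by
  rw [Real.div_rpow hC (by positivity), ← Real.rpow_mul ht, div_mul_eq_mul_div,
    Real.div_rpow (by positivity) (by positivity), ← Real.rpow_mul ht]

noncomputable def moserRadius (δ : ℝ) (k : ℕ) : ℝ := δ + (1 - δ) / 2 ^ k

theorem moserRadius_zero (δ : ℝ) : moserRadius δ 0 = 1 := by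
  simp [moserRadius]

theorem moserRadius_sub_succ (δ : ℝ) (k : ℕ) :
    moserRadius δ k - moserRadius δ (k + 1) = (1 - δ) / 2 ^ (k + 1) := by
  simp only [moserRadius, pow_succ]
  ring

theorem lt_moserRadius {δ : ℝ} (hδ : δ < 1) (k : ℕ) : δ < moserRadius δ k := by
  have : 0 < (1 - δ) / 2 ^ k := div_pos (sub_pos.2 hδ) (by positivity)
  simp only [moserRadius]
  linarith

theorem strictAnti_moserRadius {δ : ℝ} (hδ : δ < 1) : StrictAnti (moserRadius δ) :=
  strictAnti_nat_of_succ_lt fun k => by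
    have hgap := moserRadius_sub_succ δ k
    have : 0 < (1 - δ) / 2 ^ (k + 1) := div_pos (sub_pos.2 hδ) (by positivity)
    linarith

theorem moserRadius_le_one {δ : ℝ} (hδ : δ < 1) (k : ℕ) : moserRadius δ k ≤ 1 :=
  moserRadius_zero δ ▸ (strictAnti_moserRadius hδ).antitone k.zero_le

open Finset in
theorem prod_iterate_constants_le {δ C γ κ q : ℝ} (hC : 1 ≤ C) (hγ : 0 ≤ γ) (hδ0 : 0 ≤ δ)
    (hδ1 : δ < 1) (hκ : 1 < κ) (hq : 0 < q) (n : ℕ) :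
    ∏ k ∈ range n,
        ENNReal.ofReal (C / (moserRadius δ k - moserRadius δ (k + 1)) ^ γ) ^ (1 / (q * κ ^ k))
      ≤ ENNReal.ofReal
          (((C / (1 - δ) ^ γ) ^ (1 - κ⁻¹)⁻¹ * (2 ^ γ) ^ ((1 - κ⁻¹)⁻¹ ^ 2)) ^ (1 / q)) := by
  have h1δ : 0 < 1 - δ := sub_pos.2 hδ1
  have hstep : ∀ k : ℕ, C / (moserRadius δ k - moserRadius δ (k + 1)) ^ γ
      = C / (1 - δ) ^ γ * (2 ^ γ) ^ (k + 1) := fun k => by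
    rw [moserRadius_sub_succ, Real.div_rpow h1δ.le (by positivity), ← Real.rpow_natCast,
      ← Real.rpow_mul zero_le_two, mul_comm, Real.rpow_mul zero_le_two, Real.rpow_natCast]
    field_simp
  have hA := one_le_div_rpow hC h1δ (by linarith) hγ
  have hb : (1 : ℝ) ≤ 2 ^ γ := Real.one_le_rpow one_le_two hγ
  calc ∏ k ∈ range n,
        ENNReal.ofReal (C / (moserRadius δ k - moserRadius δ (k + 1)) ^ γ) ^ (1 / (q * κ ^ k))
      = ENNReal.ofReal
          (∏ k ∈ range n, (C / (1 - δ) ^ γ * (2 ^ γ) ^ (k + 1)) ^ (κ⁻¹ ^ k / q)) := by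
        rw [ENNReal.ofReal_prod_of_nonneg fun k _ => by positivity]
        refine prod_congr rfl fun k _ => ?_
        rw [hstep, ENNReal.ofReal_rpow_of_pos (by positivity), inv_pow, inv_div_left,
          one_div]
    _ ≤ _ := ENNReal.ofReal_le_ofReal <|
        prod_mul_pow_rpow_le hA hb (by positivity) (inv_lt_one_of_one_lt₀ hκ) hq n

theorem statement13_general {X : Type*} [MeasurableSpace X] (μ : Measure X)
    (U : ℝ → Set X)
    (hUmono : ∀ σ' σ : ℝ, 0 < σ' → σ' ≤ σ → σ ≤ 1 → U σ' ⊆ U σ)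
    (hU1 : μ (U 1) ≤ 1)
    (κ p₀ C γ : ℝ) (hκ : 1 < κ) (hp₀pos : 0 < p₀) (hC : 1 ≤ C) (hγ : 0 < γ)
    (f : X → ℝ) (hf : Measurable f)
    (hiter : ∀ σ' σ β : ℝ, 0 < σ' → σ' < σ → σ ≤ 1 → 0 < β → β ≤ p₀ / κ →
      plnorm μ (U σ') f (β * κ)
        ≤ ENNReal.ofReal (C / (σ - σ') ^ γ) ^ (1 / β) * plnorm μ (U σ) f β) :
    ∃ M γ₀ : ℝ, 0 < M ∧ 0 < γ₀ ∧
      ∀ δ p : ℝ, δ ∈ Ioo (0 : ℝ) 1 → 0 < p → p ≤ p₀ / κ →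
        plnorm μ (U δ) f p₀
          ≤ ENNReal.ofReal (M / (1 - δ) ^ γ₀) ^ (1 / p - 1 / p₀) * plnorm μ (U 1) f p := by
  have hκ0 : 0 < κ := one_pos.trans hκ
  set r := (1 - κ⁻¹)⁻¹
  have hr : 0 < r := inv_pos.2 (sub_pos.2 (inv_lt_one_of_one_lt₀ hκ))
  have hM : 0 < (C ^ r * (2 ^ γ) ^ (r ^ 2)) ^ (κ * r) := by
    have : 0 < C := one_pos.trans_le hC
    positivity
  refine ⟨_, γ * r * (κ * r), hM, by positivity, ?_⟩
  rintro δ p ⟨hδ0, hδ1⟩ hp hpκ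
  have hpp₀ : p * κ ≤ p₀ := (le_div_iff₀ hκ0).1 hpκ
  obtain ⟨n, q, hq, hqp₀, hqB, hqp, hpq⟩ := exists_mul_pow_eq_of_mul_le hκ hp hpp₀
  set Z := (C / (1 - δ) ^ γ) ^ r * (2 ^ γ) ^ (r ^ 2)
  have hZ : 1 ≤ Z := one_le_mul_of_one_le_of_one_le
    (Real.one_le_rpow (one_le_div_rpow hC (sub_pos.2 hδ1) (by linarith) hγ.le) hr.le)
    (Real.one_le_rpow (Real.one_le_rpow one_le_two hγ.le) (by positivity))
  calc plnorm μ (U δ) f p₀ ≤ plnorm μ (U (moserRadius δ n)) f (q * κ ^ n) := by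
        rw [hqp₀]
        exact plnorm_mono_set μ (hUmono _ _ hδ0 (lt_moserRadius hδ1 n).le
          (moserRadius_le_one hδ1 n)) f hp₀pos.le
    _ ≤ _ * plnorm μ (U (moserRadius δ 0)) f q :=
        plnorm_iterate_le μ hiter (fun k => hδ0.trans (lt_moserRadius hδ1 k))
          (strictAnti_moserRadius hδ1) (moserRadius_zero δ).le hq hκ0 hqB
    _ ≤ ENNReal.ofReal (Z ^ (1 / q)) * plnorm μ (U 1) f p := by
        rw [moserRadius_zero]
        gcongr
        · exact prod_iterate_constants_le hC hγ.le hδ0.le hδ1 hκ hq n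
        · exact plnorm_mono_exponent μ hU1 hf.aestronglyMeasurable hq hqp
    _ ≤ _ := by
        rw [← div_rpow_rpow_mul_rpow (by linarith) (sub_pos.2 hδ1).le (by positivity),
          ENNReal.ofReal_rpow_of_pos (by positivity), ← Real.rpow_mul (by positivity)]
        gcongr
        exact one_div_le_mul_sub hκ hp hpp₀ hpq

/-- second Moser iteration lemma, Lemma A.6/A.7.
Assume `μ(U₁) ≤ 1`, `κ > 1`, `0 < p₀ < κ`, `C ≥ 1`, `γ > 0`, and let `f` be measurable
with `‖f‖_{L^{βκ}(U_{σ'})} ≤ (C/(σ-σ')^γ)^{1/β} ‖f‖_{L^β(U_σ)}` for all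
`0 < σ' < σ ≤ 1` and `0 < β ≤ p₀/κ < 1`. Then there are `M = M(C,γ,κ)`, `γ₀ = γ₀(γ,κ)`
with `‖f‖_{L^{p₀}(U_δ)} ≤ (M/(1-δ)^{γ₀})^{1/p - 1/p₀} ‖f‖_{L^p(U₁)}` for all
`δ ∈ (0,1)` and `p ∈ (0, p₀/κ]`. -/
theorem statement13 {X : Type*} [MeasurableSpace X] (μ : Measure X)
    (U : ℝ → Set X)
    (hUmeas : ∀ σ : ℝ, 0 < σ → σ ≤ 1 → MeasurableSet (U σ))
    (hUmono : ∀ σ' σ : ℝ, 0 < σ' → σ' ≤ σ → σ ≤ 1 → U σ' ⊆ U σ)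
    (hU1 : μ (U 1) ≤ 1)
    (κ p₀ C γ : ℝ) (hκ : 1 < κ) (hp₀pos : 0 < p₀) (hp₀ : p₀ < κ) (hC : 1 ≤ C) (hγ : 0 < γ)
    (hp₀κ : p₀ / κ < 1)
    (f : X → ℝ) (hf : Measurable f)
    (hiter : ∀ σ' σ β : ℝ, 0 < σ' → σ' < σ → σ ≤ 1 → 0 < β → β ≤ p₀ / κ →
      plnorm μ (U σ') f (β * κ)
        ≤ ENNReal.ofReal (C / (σ - σ') ^ γ) ^ (1 / β) * plnorm μ (U σ) f β) :
    ∃ M γ₀ : ℝ, 0 < M ∧ 0 < γ₀ ∧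
      ∀ δ p : ℝ, δ ∈ Ioo (0 : ℝ) 1 → 0 < p → p ≤ p₀ / κ →
        plnorm μ (U δ) f p₀
          ≤ ENNReal.ofReal (M / (1 - δ) ^ γ₀) ^ (1 / p - 1 / p₀) * plnorm μ (U 1) f p :=
  statement13_general μ U hUmono hU1 κ p₀ C γ hκ hp₀pos hC hγ f hf hiter
end
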